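/- arXiv:1809.08723 — 9 statements merged into one kernel-verified Lean document; each statement's English description precedes it below -/
import Mathlib

section
/- For a combinatorial data fusion problem (V, E₀, w, ℱ), the maximum of Σ_{e ∈ E₁} w(e) over all feasible subsets E₁ ⊆ E₀ equals the maximum of the kept weight over all proper colorings χ : V → ℕ. -/
/-- `E₁` is feasible: no connected component of the graph `(V, E₁)` contains a forbidden set. -/
def Feasible {V : Type*} (E₁ : Set (Sym2 V)) (ℱ : Set (Set V)) : Prop :=
  ∀ F ∈ ℱ, ¬ ∀ u ∈ F, ∀ v ∈ F, (SimpleGraph.fromEdgeSet E₁).Reachable u v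

/-- `χ` is a proper coloring: no forbidden set is monochromatic. -/
def ProperColoring {V : Type*} (χ : V → ℕ) (ℱ : Set (Set V)) : Prop :=
  ∀ F ∈ ℱ, ¬ ∃ j, ∀ v ∈ F, χ v = j

/-- The kept weight of a coloring: total weight of monochromatic edges. -/
noncomputable def keptWeight {V : Type*} (G : SimpleGraph V) (w : Sym2 V → ℝ)
    (χ : V → ℕ) : ℝ :=
  ∑ᶠ e ∈ {e ∈ G.edgeSet | ∀ u ∈ e, ∀ v ∈ e, χ u = χ v}, w e

/-!
The monochromatic edges of a proper coloring form a feasible set, since colors are constant on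
the components these edges span; so every kept weight is the weight of a feasible set.
Conversely, coloring each vertex by its connected component in `(V, E₁)` turns a feasible `E₁`
into a proper coloring that keeps every edge of `E₁`, hence, weights being positive, keeps at
least the weight of `E₁`. The two finite sets of values thus share their maximum.
-/

open SimpleGraph

theorem finsum_mem_le_finsum_mem_of_subset {α M : Type*} [AddCommMonoid M] [PartialOrder M]
    [IsOrderedAddMonoid M] {f : α → M} {s t : Set α} (hst : s ⊆ t) (ht : t.Finite)
    (hf : ∀ i ∈ t, 0 ≤ f i) : ∑ᶠ i ∈ s, f i ≤ ∑ᶠ i ∈ t, f i := by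
  rw [← finsum_mem_add_sdiff hst ht]
  exact le_add_of_nonneg_right <| finsum_nonneg fun i ↦ finsum_nonneg fun hi ↦ hf i hi.1

theorem exists_isGreatest_isGreatest_of_subset {α : Type*} [LinearOrder α] {s t : Set α}
    (hs : s.Finite) (hne : s.Nonempty) (hts : t ⊆ s) (hst : ∀ x ∈ s, ∃ y ∈ t, x ≤ y) :
    ∃ m, IsGreatest s m ∧ IsGreatest t m := by
  obtain ⟨x, hx, hx_max⟩ := Set.exists_max_image s id hs hne
  obtain ⟨y, hy, hxy⟩ := hst x hx
  have hy_max : y ∈ upperBounds s := fun z hz ↦ (hx_max z hz).trans hxy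
  exact ⟨y, ⟨hts hy, hy_max⟩, hy, upperBounds_mono_set hts hy_max⟩

section Coloring

variable {V α : Type*}

def monochromaticEdges (G : SimpleGraph V) (χ : V → α) : Set (Sym2 V) :=
  {e ∈ G.edgeSet | ∀ u ∈ e, ∀ v ∈ e, χ u = χ v}

theorem SimpleGraph.Reachable.eq_of_monochromatic {χ : V → α} {E : Set (Sym2 V)}
    (hE : ∀ e ∈ E, ∀ u ∈ e, ∀ v ∈ e, χ u = χ v) {u v : V}
    (h : (fromEdgeSet E).Reachable u v) : χ u = χ v := by
  obtain ⟨p⟩ := h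
  induction p with
  | nil => rfl
  | cons hab _ ih =>
    exact (hE _ ((fromEdgeSet_adj _).mp hab).1 _ (Sym2.mem_mk_left _ _) _
      (Sym2.mem_mk_right _ _)).trans ih

theorem feasible_monochromaticEdges {ℱ : Set (Set V)} (hℱ : ∀ F ∈ ℱ, F.Nonempty)
    (G : SimpleGraph V) {χ : V → ℕ} (hχ : ProperColoring χ ℱ) :
    Feasible (monochromaticEdges G χ) ℱ := by
  intro F hF hreach
  obtain ⟨x, hx⟩ := hℱ F hF
  exact hχ F hF ⟨χ x, fun v hv ↦
    (hreach v hv x hx).eq_of_monochromatic fun _ he ↦ he.2⟩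

theorem feasible_empty {ℱ : Set (Set V)} (hℱ : ∀ F ∈ ℱ, F.Nontrivial) :
    Feasible ∅ ℱ := by
  intro F hF hreach
  obtain ⟨a, ha, b, hb, hab⟩ := hℱ F hF
  rw [fromEdgeSet_empty] at hreach
  exact hab (reachable_bot.mp (hreach a ha b hb))

instance SimpleGraph.ConnectedComponent.countable [Countable V] (G : SimpleGraph V) :
    Countable G.ConnectedComponent :=
  Quotient.countable

noncomputable def componentColoring [Countable V] (E : Set (Sym2 V)) : V → ℕ :=
  (exists_injective_nat (fromEdgeSet E).ConnectedComponent).choose ∘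
    (fromEdgeSet E).connectedComponentMk

theorem componentColoring_eq_iff [Countable V] {E : Set (Sym2 V)} {u v : V} :
    componentColoring E u = componentColoring E v ↔ (fromEdgeSet E).Reachable u v :=
  (exists_injective_nat (fromEdgeSet E).ConnectedComponent).choose_spec.eq_iff.trans
    ConnectedComponent.eq

theorem properColoring_componentColoring [Countable V] {E : Set (Sym2 V)} {ℱ : Set (Set V)}
    (hE : Feasible E ℱ) : ProperColoring (componentColoring E) ℱ := by
  rintro F hF ⟨j, hj⟩
  exact hE F hF fun u hu v hv ↦ componentColoring_eq_iff.mp ((hj u hu).trans (hj v hv).symm)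

theorem subset_monochromaticEdges_componentColoring [Countable V] {G : SimpleGraph V}
    {E : Set (Sym2 V)} (hE : E ⊆ G.edgeSet) :
    E ⊆ monochromaticEdges G (componentColoring E) := by
  intro e he
  refine ⟨hE he, ?_⟩
  induction e using Sym2.ind with
  | _ a b =>
    have hadj : (fromEdgeSet E).Adj a b := (fromEdgeSet_adj _).mpr ⟨he, G.ne_of_adj (hE he)⟩
    have hab : componentColoring E a = componentColoring E b :=
      componentColoring_eq_iff.mpr hadj.reachable
    simp only [Sym2.mem_iff]
    rintro u (rfl | rfl) v (rfl | rfl) <;> simp [hab]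

end Coloring

theorem stmt_1_general {V : Type*} [Fintype V] (G : SimpleGraph V)
    (w : Sym2 V → ℝ) (hw : ∀ e ∈ G.edgeSet, 0 < w e)
    (ℱ : Set (Set V)) (hF : ∀ F ∈ ℱ, 2 ≤ F.ncard) :
    ∃ m : ℝ,
      IsGreatest {x : ℝ | ∃ E₁ ⊆ G.edgeSet, Feasible E₁ ℱ ∧ x = ∑ᶠ e ∈ E₁, w e} m ∧
      IsGreatest {x : ℝ | ∃ χ : V → ℕ, ProperColoring χ ℱ ∧ x = keptWeight G w χ} m := by
  have hℱ : ∀ F ∈ ℱ, F.Nontrivial := fun F hF' ↦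
    (Set.one_lt_ncard_iff_nontrivial_and_finite.mp (hF F hF')).1
  have hempty : Feasible ∅ ℱ := feasible_empty hℱ
  refine exists_isGreatest_isGreatest_of_subset ?_ ⟨0, ∅, Set.empty_subset _, hempty,
    finsum_mem_empty.symm⟩ ?_ ?_
  · exact (Set.finite_range fun E : Set (Sym2 V) ↦ ∑ᶠ e ∈ E, w e).subset
      fun _ ⟨E, _, _, hx⟩ ↦ ⟨E, hx.symm⟩
  · rintro _ ⟨χ, hχ, rfl⟩
    exact ⟨monochromaticEdges G χ, fun _ he ↦ he.1,
      feasible_monochromaticEdges (fun F hF' ↦ (hℱ F hF').nonempty) G hχ, rfl⟩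
  · rintro _ ⟨E, hE, hfeas, rfl⟩
    exact ⟨_, ⟨componentColoring E, properColoring_componentColoring hfeas, rfl⟩,
      finsum_mem_le_finsum_mem_of_subset (subset_monochromaticEdges_componentColoring hE)
        (Set.toFinite _) fun e he ↦ (hw e he.1).le⟩

/-- the maximum total weight of a feasible subset of edges equals the maximum
kept weight over proper colorings. -/
theorem stmt_1 {V : Type*} [Fintype V] (G : SimpleGraph V) (hG : G.Connected)
    (w : Sym2 V → ℝ) (hw : ∀ e ∈ G.edgeSet, 0 < w e)
    (ℱ : Set (Set V)) (hF : ∀ F ∈ ℱ, 2 ≤ F.ncard) :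
    ∃ m : ℝ,
      IsGreatest {x : ℝ | ∃ E₁ ⊆ G.edgeSet, Feasible E₁ ℱ ∧ x = ∑ᶠ e ∈ E₁, w e} m ∧
      IsGreatest {x : ℝ | ∃ χ : V → ℕ, ProperColoring χ ℱ ∧ x = keptWeight G w χ} m :=
  stmt_1_general G w hw ℱ hF
end

section
/- Let G = (V, E₀) be a finite connected simple graph with positive edge weights w, and suppose there is exactly one forbidden set F ⊆ V, with |F| ≥ 2. Then every feasible subset E₁ ⊆ E₀ of maximum total weight induces a graph (V, E₁) with exactly two connected components. -/
open SimpleGraph in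
/-- Reachability after inserting a single edge `s(x,y)`: either the endpoints were already
reachable, or the path goes through the new edge in one of the two directions. -/
lemma walk_insert_edge_aux {V : Type*} {E₁ : Set (Sym2 V)} {x y : V} :
    ∀ {u v : V}, (fromEdgeSet (insert s(x, y) E₁)).Walk u v →
      (fromEdgeSet E₁).Reachable u v ∨
      ((fromEdgeSet E₁).Reachable u x ∧ (fromEdgeSet E₁).Reachable y v) ∨
      ((fromEdgeSet E₁).Reachable u y ∧ (fromEdgeSet E₁).Reachable x v) := by
  intro u v p
  induction p with
  | nil => exact Or.inl (Reachable.refl _)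
  | @cons a b c hadj p ih =>
    rw [fromEdgeSet_adj] at hadj
    obtain ⟨hmem, hne⟩ := hadj
    rcases Set.mem_insert_iff.mp hmem with heq | hmem'
    · rcases Sym2.eq_iff.mp heq with ⟨hax, hby⟩ | ⟨hay, hbx⟩
      · subst hax; subst hby
        rcases ih with h | ⟨h1, h2⟩ | ⟨h1, h2⟩
        · exact Or.inr (Or.inl ⟨Reachable.refl _, h⟩)
        · exact Or.inr (Or.inl ⟨Reachable.refl _, h2⟩)
        · exact Or.inl h2
      · subst hay; subst hbx
        rcases ih with h | ⟨h1, h2⟩ | ⟨h1, h2⟩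
        · exact Or.inr (Or.inr ⟨Reachable.refl _, h⟩)
        · exact Or.inl h2
        · exact Or.inr (Or.inr ⟨Reachable.refl _, h2⟩)
    · have hab : (fromEdgeSet E₁).Adj a b := (fromEdgeSet_adj _).mpr ⟨hmem', hne⟩
      rcases ih with h | ⟨h1, h2⟩ | ⟨h1, h2⟩
      · exact Or.inl (hab.reachable.trans h)
      · exact Or.inr (Or.inl ⟨hab.reachable.trans h1, h2⟩)
      · exact Or.inr (Or.inr ⟨hab.reachable.trans h1, h2⟩)

/-- with a single forbidden set `F` (with `|F| ≥ 2`), every maximum-weight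
feasible edge subset `E₁` induces a graph `(V, E₁)` with exactly two connected components. -/
theorem stmt_5 {V : Type*} [Fintype V] (G : SimpleGraph V) (hG : G.Connected)
    (w : Sym2 V → ℝ) (hw : ∀ e ∈ G.edgeSet, 0 < w e)
    (F : Set V) (hF : 2 ≤ F.ncard)
    (E₁ : Set (Sym2 V)) (hE₁ : E₁ ⊆ G.edgeSet) (hfeas : Feasible E₁ {F})
    (hmax : ∀ E₂ ⊆ G.edgeSet, Feasible E₂ {F} → (∑ᶠ e ∈ E₂, w e) ≤ ∑ᶠ e ∈ E₁, w e) :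
    Nat.card (SimpleGraph.fromEdgeSet E₁).ConnectedComponent = 2 := by
  classical
  have hfeas' := hfeas F (Set.mem_singleton F)
  push_neg at hfeas'
  obtain ⟨u, hu, v, hv, huv⟩ := hfeas'
  have hne : (SimpleGraph.fromEdgeSet E₁).connectedComponentMk u ≠ (SimpleGraph.fromEdgeSet E₁).connectedComponentMk v :=
    fun h => huv (SimpleGraph.ConnectedComponent.exact h)
  have key : ∀ c : (SimpleGraph.fromEdgeSet E₁).ConnectedComponent,
      c = (SimpleGraph.fromEdgeSet E₁).connectedComponentMk u ∨ c = (SimpleGraph.fromEdgeSet E₁).connectedComponentMk v := by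
    intro c
    by_contra hc
    push_neg at hc
    obtain ⟨hcu, hcv⟩ := hc
    obtain ⟨z, hz⟩ := c.exists_rep
    set S : Set V := {t | (SimpleGraph.fromEdgeSet E₁).connectedComponentMk t = c} with hSdef
    have hzS : z ∈ S := hz
    have huS : u ∉ S := fun h => hcu (h.symm)
    obtain ⟨p⟩ := hG.preconnected z u
    obtain ⟨d, -, hdS, hdnS⟩ := p.exists_boundary_dart S hzS huS
    set x := d.fst with hxdef
    set y := d.snd with hydef
    have hadjG : G.Adj x y := d.adj
    have hxy : x ≠ y := hadjG.ne
    have hxc : (SimpleGraph.fromEdgeSet E₁).connectedComponentMk x = c := hdS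
    have hyc : (SimpleGraph.fromEdgeSet E₁).connectedComponentMk y ≠ c := hdnS
    have henotin : s(x, y) ∉ E₁ := by
      intro hmem
      have : (SimpleGraph.fromEdgeSet E₁).Adj x y := (SimpleGraph.fromEdgeSet_adj _).mpr ⟨hmem, hxy⟩
      exact hyc ((SimpleGraph.ConnectedComponent.connectedComponentMk_eq_of_adj this).symm.trans hxc)
    have hE₂sub : insert s(x, y) E₁ ⊆ G.edgeSet := by
      intro e he
      rcases Set.mem_insert_iff.mp he with h | h
      · subst h; exact hadjG
      · exact hE₁ h
    have feas₂ : Feasible (insert s(x, y) E₁) {F} := by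
      intro F' hF'
      rcases Set.mem_singleton_iff.mp hF' with rfl
      intro hall
      obtain ⟨q⟩ := hall u hu v hv
      rcases walk_insert_edge_aux q with h | ⟨h1, h2⟩ | ⟨h1, h2⟩
      · exact huv h
      · exact hcu (((SimpleGraph.ConnectedComponent.sound h1).trans hxc).symm)
      · exact hcv (hxc.symm.trans (SimpleGraph.ConnectedComponent.sound h2))
    have hfin : E₁.Finite := Set.toFinite E₁
    have hsum : ∑ᶠ e ∈ insert s(x, y) E₁, w e = w s(x, y) + ∑ᶠ e ∈ E₁, w e :=
      finsum_mem_insert w henotin hfin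
    have hle := hmax _ hE₂sub feas₂
    rw [hsum] at hle
    have hpos : 0 < w s(x, y) := hw _ hadjG
    linarith
  rw [Nat.card_eq_two_iff]
  refine ⟨(SimpleGraph.fromEdgeSet E₁).connectedComponentMk u, (SimpleGraph.fromEdgeSet E₁).connectedComponentMk v, hne, ?_⟩
  apply Set.eq_univ_of_forall
  intro c
  rcases key c with h | h
  · exact Or.inl h
  · exact Or.inr h
end

section
/- Let G = (V, E₀) be a finite connected simple graph, let F ⊆ V with |F| ≥ 2 be the unique forbidden set, and let E₁ ⊆ E₀ be feasible. If the graph (V, E₁) has strictly more than two connected components, then there exists an edge e ∈ E₀ \ E₁ such that E₁ ∪ {e} is still feasible. -/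
open SimpleGraph in
lemma reach_ins {V : Type*} {E₁ : Set (Sym2 V)} {x y a b : V}
    (h : (fromEdgeSet (insert s(x, y) E₁)).Reachable a b) :
    (fromEdgeSet E₁).Reachable a b ∨
    ((fromEdgeSet E₁).Reachable a x ∧ (fromEdgeSet E₁).Reachable y b) ∨
    ((fromEdgeSet E₁).Reachable a y ∧ (fromEdgeSet E₁).Reachable x b) := by
  rw [SimpleGraph.reachable_iff_reflTransGen] at h
  induction h with
  | refl => exact Or.inl (Reachable.refl a)
  | @tail c d hac hcd ih =>
    rw [SimpleGraph.fromEdgeSet_adj, Set.mem_insert_iff] at hcd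
    obtain ⟨hmem | hmem, hne⟩ := hcd
    · rw [Sym2.eq_iff] at hmem
      rcases hmem with ⟨hcx, hdy⟩ | ⟨hcy, hdx⟩
      · subst hcx; subst hdy
        rcases ih with h1 | ⟨h1, h2⟩ | ⟨h1, h2⟩
        · exact Or.inr (Or.inl ⟨h1, Reachable.refl _⟩)
        · exact Or.inr (Or.inl ⟨h1, Reachable.refl _⟩)
        · exact Or.inl h1
      · subst hcy; subst hdx
        rcases ih with h1 | ⟨h1, h2⟩ | ⟨h1, h2⟩
        · exact Or.inr (Or.inr ⟨h1, Reachable.refl _⟩)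
        · exact Or.inl h1
        · exact Or.inr (Or.inr ⟨h1, Reachable.refl _⟩)
    · have hadj : (fromEdgeSet E₁).Adj c d := by
        rw [SimpleGraph.fromEdgeSet_adj]; exact ⟨hmem, hne⟩
      rcases ih with h1 | ⟨h1, h2⟩ | ⟨h1, h2⟩
      · exact Or.inl (h1.trans hadj.reachable)
      · exact Or.inr (Or.inl ⟨h1, h2.trans hadj.reachable⟩)
      · exact Or.inr (Or.inr ⟨h1, h2.trans hadj.reachable⟩)

lemma exists_third {α : Type*} [Finite α] (h : 2 < Nat.card α) (a b : α) :
    ∃ c, c ≠ a ∧ c ≠ b := by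
  by_contra hc
  push_neg at hc
  have hsub : (Set.univ : Set α) ⊆ {a, b} := by
    intro c _
    by_cases hca : c = a
    · exact Or.inl hca
    · exact Or.inr (hc c hca)
  have h1 : Nat.card α = (Set.univ : Set α).ncard := (Set.ncard_univ α).symm
  have h2 : (Set.univ : Set α).ncard ≤ ({a, b} : Set α).ncard :=
    Set.ncard_le_ncard hsub (Set.toFinite _)
  have h3 : ({a, b} : Set α).ncard ≤ 2 := by
    have := Set.ncard_insert_le a ({b} : Set α)
    simpa using this
  omega

open SimpleGraph in
lemma exists_crossing {V : Type*} (G : SimpleGraph V) (H : SimpleGraph V) {w : V} :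
    ∀ {a b : V} (_ : G.Walk a b), H.Reachable w a → ¬ H.Reachable w b →
    ∃ x y, G.Adj x y ∧ H.Reachable w x ∧ ¬ H.Reachable w y := by
  intro a b p
  induction p with
  | nil => intro h1 h2; exact absurd h1 h2
  | @cons c d e hcd q ih =>
    intro h1 h2
    by_cases hd : H.Reachable w d
    · exact ih hd h2
    · exact ⟨c, d, hcd, h1, hd⟩

/-- with a single forbidden set `F` (with `|F| ≥ 2`), if a feasible `E₁` induces
strictly more than two connected components, then some edge of `E₀ \ E₁` can be added
while keeping feasibility. -/
theorem stmt_6 {V : Type*} [Fintype V] (G : SimpleGraph V) (hG : G.Connected)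
    (F : Set V) (hF : 2 ≤ F.ncard)
    (E₁ : Set (Sym2 V)) (hE₁ : E₁ ⊆ G.edgeSet) (hfeas : Feasible E₁ {F})
    (hcomp : 2 < Nat.card (SimpleGraph.fromEdgeSet E₁).ConnectedComponent) :
    ∃ e ∈ G.edgeSet \ E₁, Feasible (insert e E₁) {F} := by
  set H := SimpleGraph.fromEdgeSet E₁ with hH
  have hfe := hfeas F rfl
  push_neg at hfe
  obtain ⟨u, hu, v, hv, huv⟩ := hfe
  obtain ⟨D, hD1, hD2⟩ := exists_third hcomp (H.connectedComponentMk u) (H.connectedComponentMk v)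
  obtain ⟨w, hw⟩ := D.exists_rep
  rw [← hw] at hD1 hD2
  have hwu : ¬ H.Reachable w u := by
    intro hr
    exact hD1 (SimpleGraph.ConnectedComponent.eq.mpr hr)
  have hwv : ¬ H.Reachable w v := by
    intro hr
    exact hD2 (SimpleGraph.ConnectedComponent.eq.mpr hr)
  obtain ⟨x, y, hxy, hwx, hwy⟩ :=
    exists_crossing G H ((hG.preconnected w u).some) (SimpleGraph.Reachable.refl w) hwu
  refine ⟨s(x, y), ⟨hxy, ?_⟩, ?_⟩
  · intro hmem
    exact hwy (hwx.trans (SimpleGraph.Adj.reachable (by rw [hH, SimpleGraph.fromEdgeSet_adj]; exact ⟨hmem, hxy.ne⟩)))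
  · intro F' hF' hall
    rw [Set.mem_singleton_iff] at hF'
    subst hF'
    have hreach := hall u hu v hv
    rcases reach_ins hreach with h1 | ⟨h1, h2⟩ | ⟨h1, h2⟩
    · exact huv h1
    · exact hwu (hwx.trans h1.symm)
    · exact hwv (hwx.trans h2)
end

section
/- Let (V, E₀, w, ℱ) be a combinatorial data fusion problem with |ℱ| = b forbidden sets, and suppose at least one proper coloring exists. Then there exists an optimal proper coloring χ (one minimizing cut cost among all proper colorings) whose number of distinct colors t = |χ(V)| satisfies 2b ≥ t² − t, i.e., b ≥ t(t−1)/2. -/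
noncomputable def cutCost {V : Type*} (G : SimpleGraph V) (w : Sym2 V → ℝ)
    (χ : V → ℕ) : ℝ :=
  ∑ᶠ e ∈ {e ∈ G.edgeSet | ¬ ∀ u ∈ e, ∀ v ∈ e, χ u = χ v}, w e

lemma proper_of_ker {V : Type*} {ℱ : Set (Set V)} {χ χ' : V → ℕ}
    (h : ∀ u v, χ u = χ v → χ' u = χ' v) (hp : ProperColoring χ' ℱ) :
    ProperColoring χ ℱ := by
  intro F hF hmono
  refine hp F hF ?_
  rcases F.eq_empty_or_nonempty with rfl | ⟨v0, hv0⟩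
  · exact ⟨0, by simp⟩
  · obtain ⟨j, hj⟩ := hmono
    exact ⟨χ' v0, fun v hv => h v v0 ((hj v hv).trans (hj v0 hv0).symm)⟩

lemma cutCost_le {V : Type*} [Fintype V] (G : SimpleGraph V) (w : Sym2 V → ℝ)
    (hw : ∀ e ∈ G.edgeSet, 0 ≤ w e) {χ χ' : V → ℕ}
    (h : ∀ u v, χ' u = χ' v → χ u = χ v) : cutCost G w χ ≤ cutCost G w χ' := by
  classical
  have hfin : ∀ ψ : V → ℕ,
      ({e ∈ G.edgeSet | ¬ ∀ u ∈ e, ∀ v ∈ e, ψ u = ψ v} : Set (Sym2 V)).Finite :=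
    fun ψ => Set.Finite.subset (Set.toFinite _) (fun e he => he.1)
  rw [cutCost, cutCost, finsum_mem_eq_finite_toFinset_sum _ (hfin χ),
    finsum_mem_eq_finite_toFinset_sum _ (hfin χ')]
  apply Finset.sum_le_sum_of_subset_of_nonneg
  · intro e he
    rw [Set.Finite.mem_toFinset] at he ⊢
    refine ⟨he.1, fun hall => he.2 fun u hu v hv => h u v (hall u hu v hv)⟩
  · intro e he _
    rw [Set.Finite.mem_toFinset] at he
    exact hw e he.1

open Classical in
/-- Canonicalization: any proper coloring can be relabeled to use colors `< Fintype.card V`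
with the same kernel. -/
lemma exists_canonical {V : Type*} [Fintype V] {ℱ : Set (Set V)} (χ : V → ℕ)
    (hχ : ProperColoring χ ℱ) :
    ∃ chat : V → ℕ, ProperColoring chat ℱ ∧ (∀ v, chat v < Fintype.card V) ∧
      (∀ u v, chat u = chat v ↔ χ u = χ v) := by
  classical
  set S : Finset ℕ := Finset.univ.image χ with hS
  set chat : V → ℕ := fun v => (S.filter (· < χ v)).card with hchat
  have hmemS : ∀ v, χ v ∈ S := fun v => Finset.mem_image_of_mem χ (Finset.mem_univ v)
  have hstrict : ∀ u v : V, χ u < χ v → chat u < chat v := by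
    intro u v huv
    apply Finset.card_lt_card
    constructor
    · intro x hx
      rw [Finset.mem_filter] at hx ⊢
      exact ⟨hx.1, lt_trans hx.2 huv⟩
    · intro hsub
      have : χ u ∈ S.filter (· < χ u) := hsub (by
        rw [Finset.mem_filter]; exact ⟨hmemS u, huv⟩)
      rw [Finset.mem_filter] at this
      exact lt_irrefl _ this.2
  have hker : ∀ u v, chat u = chat v ↔ χ u = χ v := by
    intro u v
    constructor
    · intro h
      rcases lt_trichotomy (χ u) (χ v) with hlt | heq | hgt
      · exact absurd h (Nat.ne_of_lt (hstrict u v hlt))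
      · exact heq
      · exact absurd h.symm (Nat.ne_of_lt (hstrict v u hgt))
    · intro h; simp only [hchat, h]
  refine ⟨chat, proper_of_ker (fun u v h => (hker u v).mp h) hχ, ?_, hker⟩
  intro v
  have h1 : S.filter (· < χ v) ⊂ S := by
    constructor
    · exact Finset.filter_subset _ _
    · intro hsub
      have := hsub (hmemS v)
      rw [Finset.mem_filter] at this
      exact lt_irrefl _ this.2
  calc chat v < S.card := Finset.card_lt_card h1
    _ ≤ Finset.univ.card := Finset.card_image_le.trans (le_refl _)
    _ = Fintype.card V := Finset.card_univ

/-- with `b` forbidden sets, there is an optimal proper coloring whose number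
`t` of distinct colors satisfies `2b ≥ t² − t`. -/
theorem stmt_7 {V : Type*} [Fintype V] (G : SimpleGraph V) (hG : G.Connected)
    (w : Sym2 V → ℝ) (hw : ∀ e ∈ G.edgeSet, 0 < w e)
    (ℱ : Set (Set V)) (hFfin : ℱ.Finite) (hF : ∀ F ∈ ℱ, 2 ≤ F.ncard)
    (b : ℕ) (hb : ℱ.ncard = b)
    (hex : ∃ χ : V → ℕ, ProperColoring χ ℱ) :
    ∃ χ : V → ℕ, ProperColoring χ ℱ ∧
      (∀ χ' : V → ℕ, ProperColoring χ' ℱ → cutCost G w χ ≤ cutCost G w χ') ∧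
      2 * b ≥ (Set.range χ).ncard ^ 2 - (Set.range χ).ncard := by
  classical
  set n := Fintype.card V with hn
  have hwnn : ∀ e ∈ G.edgeSet, 0 ≤ w e := fun e he => (hw e he).le
  set S : Set (V → ℕ) := {χ | ProperColoring χ ℱ ∧ ∀ v, χ v < n} with hSdef
  have hSfin : S.Finite := by
    apply Set.Finite.subset (Set.Finite.pi (fun _ : V => Set.finite_Iio n))
    intro χ hχ
    simp only [Set.mem_pi, Set.mem_univ, Set.mem_Iio, forall_true_left]
    exact fun v => hχ.2 v
  have hSne : S.Nonempty := by
    obtain ⟨χ, hχ⟩ := hex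
    obtain ⟨chat, h1, h2, _⟩ := exists_canonical χ hχ
    exact ⟨chat, h1, h2⟩
  obtain ⟨χ₀, hχ₀S, hχ₀min⟩ := Set.exists_min_image S (cutCost G w) hSfin hSne
  set S₂ : Set (V → ℕ) := {χ ∈ S | cutCost G w χ ≤ cutCost G w χ₀} with hS₂def
  have hS₂fin : S₂.Finite := hSfin.subset (fun χ hχ => hχ.1)
  have hS₂ne : S₂.Nonempty := ⟨χ₀, hχ₀S, le_refl _⟩
  obtain ⟨χs, hχs, hχsmin⟩ :=
    Set.exists_min_image S₂ (fun χ => (Set.range χ).ncard) hS₂fin hS₂ne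
  have hproper : ProperColoring χs ℱ := hχs.1.1
  have hbound : ∀ v, χs v < n := hχs.1.2
  have hcostle : cutCost G w χs ≤ cutCost G w χ₀ := hχs.2
  refine ⟨χs, hproper, ?_, ?_⟩
  · intro χ' hχ'
    obtain ⟨chat, h1, h2, hker⟩ := exists_canonical χ' hχ'
    have heq : cutCost G w chat = cutCost G w χ' :=
      le_antisymm (cutCost_le G w hwnn fun u v h => (hker u v).mpr h)
        (cutCost_le G w hwnn fun u v h => (hker u v).mp h)
    calc cutCost G w χs ≤ cutCost G w χ₀ := hcostle
      _ ≤ cutCost G w chat := hχ₀min chat ⟨h1, h2⟩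
      _ = cutCost G w χ' := heq
  · -- counting
    set R : Set ℕ := Set.range χs with hR
    have hRfin : R.Finite := Set.finite_range χs
    have pairF : ∀ i ∈ R, ∀ j ∈ R, i ≠ j → ∃ F ∈ ℱ, χs '' F = {i, j} := by
      intro i hi j hj hij
      set χm : V → ℕ := fun v => if χs v = j then i else χs v with hχm
      have hker : ∀ u v, χs u = χs v → χm u = χm v := by
        intro u v h; simp only [hχm, h]
      have hcm : cutCost G w χm ≤ cutCost G w χs := cutCost_le G w hwnn hker
      have hjm : j ∉ Set.range χm := by
        rintro ⟨v, hv⟩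
        by_cases h : χs v = j
        · simp only [hχm, h, if_true] at hv; exact hij hv
        · simp only [hχm] at hv; rw [if_neg h] at hv; exact h hv
      have hsub : Set.range χm ⊆ R := by
        rintro _ ⟨v, rfl⟩
        by_cases h : χs v = j
        · simp only [hχm, h, if_true]; exact hi
        · simp only [hχm, h, if_false]; exact ⟨v, rfl⟩
      have hlt : (Set.range χm).ncard < R.ncard :=
        Set.ncard_lt_ncard ⟨hsub, fun hsub' => hjm (hsub' hj)⟩ hRfin
      have hbm : ∀ v, χm v < n := by
        intro v
        obtain ⟨vi, hvi⟩ := hi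
        by_cases h : χs v = j
        · simp only [hχm, h, if_true]; rw [← hvi]; exact hbound vi
        · simp only [hχm, h, if_false]; exact hbound v
      have hnotproper : ¬ ProperColoring χm ℱ := by
        intro hp
        have hmem : χm ∈ S₂ := ⟨⟨hp, hbm⟩, hcm.trans hcostle⟩
        exact absurd (hχsmin χm hmem) (not_le.mpr hlt)
      rw [ProperColoring] at hnotproper
      push_neg at hnotproper
      obtain ⟨F, hF, c, hc⟩ := hnotproper
      have hnm : ¬ ∃ j', ∀ v ∈ F, χs v = j' := hproper F hF
      have hxj : ∃ v ∈ F, χs v = j := by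
        by_contra hno
        push_neg at hno
        refine hnm ⟨c, fun v hv => ?_⟩
        have := hc v hv
        simp only [hχm, hno v hv, if_false] at this
        exact this
      obtain ⟨v1, hv1F, hv1⟩ := hxj
      have hci : c = i := by
        have := hc v1 hv1F
        simp only [hχm, hv1, if_true] at this
        exact this.symm
      subst hci
      refine ⟨F, hF, ?_⟩
      apply Set.Subset.antisymm
      · rintro _ ⟨v, hvF, rfl⟩
        have := hc v hvF
        by_cases h : χs v = j
        · exact Or.inr h
        · simp only [hχm, h, if_false] at this
          exact Or.inl this
      · intro x hx
        rcases hx with rfl | rfl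
        · -- need v with χs v = i
          by_contra hno
          refine hnm ⟨j, fun v hv => ?_⟩
          have h2 := hc v hv
          by_cases h : χs v = j
          · exact h
          · simp only [hχm] at h2
            rw [if_neg h] at h2
            exact absurd ((Set.mem_image _ _ _).mpr ⟨v, hv, h2⟩) hno
        · exact ⟨v1, hv1F, hv1⟩
    -- now count pairs
    set RF : Finset ℕ := hRfin.toFinset with hRF
    have ht : RF.card = R.ncard := (Set.ncard_eq_toFinset_card R hRfin).symm
    set φ : ℕ × ℕ → Set V := fun p =>
      if h : ∃ F ∈ ℱ, χs '' F = {p.1, p.2} then h.choose else ∅ with hφdef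
    have hφ : ∀ p ∈ RF.offDiag, φ p ∈ ℱ ∧ χs '' (φ p) = {p.1, p.2} := by
      intro p hp
      rw [Finset.mem_offDiag] at hp
      have h : ∃ F ∈ ℱ, χs '' F = {p.1, p.2} :=
        pairF _ (hRfin.mem_toFinset.mp hp.1) _ (hRfin.mem_toFinset.mp hp.2.1) hp.2.2
      simp only [hφdef, dif_pos h]
      exact ⟨h.choose_spec.1, h.choose_spec.2⟩
    have hcard : RF.offDiag.card ≤ 2 * (RF.offDiag.image φ).card := by
      apply Finset.card_le_mul_card_image
      intro a ha
      obtain ⟨q, hq, hqa⟩ := Finset.mem_image.mp ha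
      have hfilter : {p ∈ RF.offDiag | φ p = a} ⊆ {q, (q.2, q.1)} := by
        intro p hp
        rw [Finset.mem_filter] at hp
        have h1 := hφ p hp.1
        have h2 := hφ q hq
        have hpair : ({p.1, p.2} : Set ℕ) = {q.1, q.2} := by
          rw [← h1.2, hp.2, ← hqa, h2.2]
        rw [Set.pair_eq_pair_iff] at hpair
        rcases hpair with ⟨ha1, ha2⟩ | ⟨ha1, ha2⟩
        · exact Finset.mem_insert.mpr (Or.inl (Prod.ext ha1 ha2))
        · exact Finset.mem_insert.mpr (Or.inr (Finset.mem_singleton.mpr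
            (Prod.ext ha1 ha2)))
      calc ({p ∈ RF.offDiag | φ p = a}).card ≤ ({q, (q.2, q.1)} : Finset (ℕ × ℕ)).card :=
            Finset.card_le_card hfilter
        _ ≤ 2 := Finset.card_insert_le _ _ |>.trans (by simp)
    have himage : RF.offDiag.image φ ⊆ hFfin.toFinset := by
      intro a ha
      obtain ⟨q, hq, rfl⟩ := Finset.mem_image.mp ha
      exact hFfin.mem_toFinset.mpr (hφ q hq).1
    have hb2 : (RF.offDiag.image φ).card ≤ b := by
      calc (RF.offDiag.image φ).card ≤ hFfin.toFinset.card := Finset.card_le_card himage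
        _ = ℱ.ncard := (Set.ncard_eq_toFinset_card ℱ hFfin).symm
        _ = b := hb
    have hoff : RF.offDiag.card = R.ncard * R.ncard - R.ncard := by
      rw [Finset.offDiag_card, ht]
    have hfinal : R.ncard * R.ncard - R.ncard ≤ 2 * b := by
      rw [← hoff]
      calc RF.offDiag.card ≤ 2 * (RF.offDiag.image φ).card := hcard
        _ ≤ 2 * b := by omega
    rw [ge_iff_le, pow_two]
    exact hfinal
end

section
/- Let (V, E₀, w, ℱ) be a combinatorial data fusion problem and let χ be an optimal proper coloring using the minimum possible number of distinct colors among all optimal proper colorings. Then for every pair of distinct colors i ≠ j in the range of χ there exists a forbidden set F_{i,j} ∈ ℱ with F_{i,j} ⊆ χ⁻¹(i) ∪ χ⁻¹(j); moreover no such set is contained in a single color class, so the sets F_{i,j} are pairwise distinct over unordered pairs {i, j}. -/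
/-- if `χ` is an optimal proper coloring with the minimum number of distinct
colors among optimal proper colorings, then for each pair of distinct colors `i ≠ j` in the
range of `χ` there is a forbidden set `F_{i,j} ⊆ χ⁻¹(i) ∪ χ⁻¹(j)`; no such set lies in a
single color class, and the sets `F_{i,j}` are pairwise distinct over unordered pairs. -/
theorem stmt_8 {V : Type*} [Fintype V] (G : SimpleGraph V) (hG : G.Connected)
    (w : Sym2 V → ℝ) (hw : ∀ e ∈ G.edgeSet, 0 < w e)
    (ℱ : Set (Set V)) (hFfin : ℱ.Finite) (hF : ∀ F ∈ ℱ, 2 ≤ F.ncard)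
    (χ : V → ℕ) (hproper : ProperColoring χ ℱ)
    (hopt : ∀ χ' : V → ℕ, ProperColoring χ' ℱ → cutCost G w χ ≤ cutCost G w χ')
    (hmincol : ∀ χ' : V → ℕ, ProperColoring χ' ℱ →
      (∀ χ'' : V → ℕ, ProperColoring χ'' ℱ → cutCost G w χ' ≤ cutCost G w χ'') →
      (Set.range χ).ncard ≤ (Set.range χ').ncard) :
    ∃ Fc : ℕ → ℕ → Set V,
      (∀ i ∈ Set.range χ, ∀ j ∈ Set.range χ, i ≠ j →
        Fc i j ∈ ℱ ∧ Fc i j ⊆ χ ⁻¹' {i} ∪ χ ⁻¹' {j} ∧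
        (∀ c : ℕ, ¬ Fc i j ⊆ χ ⁻¹' {c}) ∧ Fc i j = Fc j i) ∧
      (∀ i ∈ Set.range χ, ∀ j ∈ Set.range χ, ∀ k ∈ Set.range χ, ∀ l ∈ Set.range χ,
        i ≠ j → k ≠ l → ({i, j} : Set ℕ) ≠ {k, l} → Fc i j ≠ Fc k l) := by
  classical
  have hnomono : ∀ F ∈ ℱ, ∀ c : ℕ, ¬ F ⊆ χ ⁻¹' {c} := by
    intro F hFm c hsub
    exact hproper F hFm ⟨c, fun v hv => hsub hv⟩
  have key : ∀ i, i ∈ Set.range χ → ∀ j, j ∈ Set.range χ → i ≠ j →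
      ∃ F, F ∈ ℱ ∧ F ⊆ χ ⁻¹' {i} ∪ χ ⁻¹' {j} := by
    intro i hi j hj hij
    by_contra hcon
    push_neg at hcon
    set χ' : V → ℕ := fun v => if χ v = j then i else χ v with hχ'def
    have hsame : ∀ u v : V, χ u = χ v → χ' u = χ' v := by
      intro u v h; simp only [hχ'def, h]
    have hproper' : ProperColoring χ' ℱ := by
      rintro F hFm ⟨c, hc⟩
      by_cases hci : c = i
      · subst hci
        refine hcon F hFm ?_
        intro v hv
        have h := hc v hv
        by_cases h2 : χ v = j
        · exact Or.inr h2
        · simp only [hχ'def, if_neg h2] at h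
          exact Or.inl h
      · refine hproper F hFm ⟨c, fun v hv => ?_⟩
        have h := hc v hv
        by_cases h2 : χ v = j
        · simp only [hχ'def, if_pos h2] at h; exact absurd h.symm hci
        · simpa only [hχ'def, if_neg h2] using h
    have hcost : cutCost G w χ' ≤ cutCost G w χ := by
      have hsub : {e ∈ G.edgeSet | ¬ ∀ u ∈ e, ∀ v ∈ e, χ' u = χ' v}
          ⊆ {e ∈ G.edgeSet | ¬ ∀ u ∈ e, ∀ v ∈ e, χ u = χ v} := by
        rintro e ⟨he, hne⟩
        exact ⟨he, fun hmono => hne fun u hu v hv => hsame u v (hmono u hu v hv)⟩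
      have hfin1 : {e ∈ G.edgeSet | ¬ ∀ u ∈ e, ∀ v ∈ e, χ' u = χ' v}.Finite :=
        Set.toFinite _
      have hfin2 : {e ∈ G.edgeSet | ¬ ∀ u ∈ e, ∀ v ∈ e, χ u = χ v}.Finite :=
        Set.toFinite _
      rw [cutCost, cutCost, finsum_mem_eq_finite_toFinset_sum _ hfin1,
        finsum_mem_eq_finite_toFinset_sum _ hfin2]
      apply Finset.sum_le_sum_of_subset_of_nonneg
      · intro e he
        rw [Set.Finite.mem_toFinset] at *
        exact hsub he
      · intro e he _
        rw [Set.Finite.mem_toFinset] at he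
        exact le_of_lt (hw e he.1)
    have hopt' : ∀ χ'' : V → ℕ, ProperColoring χ'' ℱ →
        cutCost G w χ' ≤ cutCost G w χ'' :=
      fun χ'' h'' => le_trans hcost (hopt χ'' h'')
    have hle := hmincol χ' hproper' hopt'
    have hssub : Set.range χ' ⊂ Set.range χ := by
      constructor
      · rintro _ ⟨v, rfl⟩
        simp only [hχ'def]
        split_ifs with h
        · exact hi
        · exact ⟨v, rfl⟩
      · intro hsup
        obtain ⟨v, hv⟩ := hsup hj
        simp only [hχ'def] at hv
        split_ifs at hv with h
        · exact hij hv
        · exact h hv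
    have hlt : (Set.range χ').ncard < (Set.range χ).ncard :=
      Set.ncard_lt_ncard hssub (Set.finite_range χ)
    omega
  choose! g hg1 hg2 using key
  refine ⟨fun i j => g (min i j) (max i j), ?_, ?_⟩
  · intro i hi j hj hij
    have hmin : min i j ∈ Set.range χ := by
      rcases min_choice i j with h | h <;> rw [h] <;> assumption
    have hmax : max i j ∈ Set.range χ := by
      rcases max_choice i j with h | h <;> rw [h] <;> assumption
    have hne : min i j ≠ max i j := (min_lt_max.mpr hij).ne
    have h1 := hg1 _ hmin _ hmax hne
    have h2 := hg2 _ hmin _ hmax hne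
    have h2' : g (min i j) (max i j) ⊆ χ ⁻¹' {i} ∪ χ ⁻¹' {j} := by
      rcases le_total i j with h | h
      · rw [min_eq_left h, max_eq_right h] at h2 ⊢; exact h2
      · rw [min_eq_right h, max_eq_left h] at h2 ⊢
        rw [Set.union_comm]; exact h2
    refine ⟨h1, h2', fun c => hnomono _ h1 c, by
      show g (min i j) (max i j) = g (min j i) (max j i)
      rw [min_comm j i, max_comm j i]⟩
  · intro i hi j hj k hk l hl hij hkl hpair heq
    have specij : g (min i j) (max i j) ∈ ℱ ∧
        g (min i j) (max i j) ⊆ χ ⁻¹' {i} ∪ χ ⁻¹' {j} := by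
      have hmin : min i j ∈ Set.range χ := by
        rcases min_choice i j with h | h <;> rw [h] <;> assumption
      have hmax : max i j ∈ Set.range χ := by
        rcases max_choice i j with h | h <;> rw [h] <;> assumption
      have hne : min i j ≠ max i j := (min_lt_max.mpr hij).ne
      refine ⟨hg1 _ hmin _ hmax hne, ?_⟩
      have h2 := hg2 _ hmin _ hmax hne
      rcases le_total i j with h | h
      · rw [min_eq_left h, max_eq_right h] at h2 ⊢; exact h2
      · rw [min_eq_right h, max_eq_left h] at h2 ⊢
        rw [Set.union_comm]; exact h2
    have speckl : g (min k l) (max k l) ∈ ℱ ∧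
        g (min k l) (max k l) ⊆ χ ⁻¹' {k} ∪ χ ⁻¹' {l} := by
      have hmin : min k l ∈ Set.range χ := by
        rcases min_choice k l with h | h <;> rw [h] <;> assumption
      have hmax : max k l ∈ Set.range χ := by
        rcases max_choice k l with h | h <;> rw [h] <;> assumption
      have hne : min k l ≠ max k l := (min_lt_max.mpr hkl).ne
      refine ⟨hg1 _ hmin _ hmax hne, ?_⟩
      have h2 := hg2 _ hmin _ hmax hne
      rcases le_total k l with h | h
      · rw [min_eq_left h, max_eq_right h] at h2 ⊢; exact h2
      · rw [min_eq_right h, max_eq_left h] at h2 ⊢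
        rw [Set.union_comm]; exact h2
    have heq' : g (min i j) (max i j) = g (min k l) (max k l) := heq
    set F := g (min i j) (max i j) with hFdef
    have hFkl : F ⊆ χ ⁻¹' {k} ∪ χ ⁻¹' {l} := heq' ▸ speckl.2
    have hFij : F ⊆ χ ⁻¹' {i} ∪ χ ⁻¹' {j} := specij.2
    have hFmem : F ∈ ℱ := specij.1
    -- F contains a vertex of each color i, j, k, l
    have hcol : ∀ m : ℕ, (∃ v ∈ F, χ v = m) → (m = i ∨ m = j) ∧ (m = k ∨ m = l) := by
      rintro m ⟨v, hv, rfl⟩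
      refine ⟨?_, ?_⟩
      · rcases hFij hv with h | h
        · exact Or.inl h
        · exact Or.inr h
      · rcases hFkl hv with h | h
        · exact Or.inl h
        · exact Or.inr h
    have hexi : ∃ v ∈ F, χ v = i := by
      obtain ⟨v, hv, hvne⟩ := Set.not_subset.mp (hnomono F hFmem j)
      rcases hFij hv with h | h
      · exact ⟨v, hv, h⟩
      · exact absurd h hvne
    have hexj : ∃ v ∈ F, χ v = j := by
      obtain ⟨v, hv, hvne⟩ := Set.not_subset.mp (hnomono F hFmem i)
      rcases hFij hv with h | h
      · exact absurd h hvne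
      · exact ⟨v, hv, h⟩
    have hexk : ∃ v ∈ F, χ v = k := by
      obtain ⟨v, hv, hvne⟩ := Set.not_subset.mp (hnomono F hFmem l)
      rcases hFkl hv with h | h
      · exact ⟨v, hv, h⟩
      · exact absurd h hvne
    have hexl : ∃ v ∈ F, χ v = l := by
      obtain ⟨v, hv, hvne⟩ := Set.not_subset.mp (hnomono F hFmem k)
      rcases hFkl hv with h | h
      · exact absurd h hvne
      · exact ⟨v, hv, h⟩
    have hik := (hcol i hexi).2
    have hjk := (hcol j hexj).2
    have hki := (hcol k hexk).1
    have hli := (hcol l hexl).1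
    apply hpair
    ext x
    simp only [Set.mem_insert_iff, Set.mem_singleton_iff]
    omega
end

section
/- Let (V, E₀, w, ℱ) be a combinatorial data fusion problem with exactly two forbidden sets, ℱ = {F, F'}. Then there exists an optimal proper coloring that uses at most two distinct colors. -/
lemma cut_mono {V : Type*} [Fintype V] (G : SimpleGraph V)
    (w : Sym2 V → ℝ) (hw : ∀ e ∈ G.edgeSet, 0 < w e) (χ χ' : V → ℕ)
    (h : ∀ e : Sym2 V, (¬ ∀ u ∈ e, ∀ v ∈ e, χ u = χ v) → (¬ ∀ u ∈ e, ∀ v ∈ e, χ' u = χ' v)) :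
    cutCost G w χ ≤ cutCost G w χ' := by
  classical
  unfold cutCost
  have h1 : ({e ∈ G.edgeSet | ¬ ∀ u ∈ e, ∀ v ∈ e, χ u = χ v} : Set (Sym2 V)).Finite :=
    Set.toFinite _
  have h2 : ({e ∈ G.edgeSet | ¬ ∀ u ∈ e, ∀ v ∈ e, χ' u = χ' v} : Set (Sym2 V)).Finite :=
    Set.toFinite _
  rw [finsum_mem_eq_finite_toFinset_sum w h1, finsum_mem_eq_finite_toFinset_sum w h2]
  apply Finset.sum_le_sum_of_subset_of_nonneg
  · intro e he
    simp only [Set.Finite.mem_toFinset, Set.mem_setOf_eq] at he ⊢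
    exact ⟨he.1, h e he.2⟩
  · intro e he _
    simp only [Set.Finite.mem_toFinset, Set.mem_setOf_eq] at he
    exact (hw e he.1).le

lemma exists_two_split (a b c d : ℕ) (hab : a ≠ b) (hcd : c ≠ d) :
    ∃ f : ℕ → ℕ, (∀ x, f x = 0 ∨ f x = 1) ∧ f a ≠ f b ∧ f c ≠ f d := by
  classical
  by_cases h1 : c = a
  · have hda : d ≠ a := fun h => hcd (h1.trans h.symm)
    exact ⟨fun x => if x = a then 0 else 1, fun x => by dsimp; split <;> simp,
      by simp [hab.symm], by simp [h1, hda]⟩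
  by_cases h2 : c = b
  · have hdb : d ≠ b := fun h => hcd (h2.trans h.symm)
    exact ⟨fun x => if x = b then 1 else 0, fun x => by dsimp; split <;> simp,
      by simp [hab], by simp [h2, hdb]⟩
  by_cases h3 : d = a
  · exact ⟨fun x => if x = a then 0 else 1, fun x => by dsimp; split <;> simp,
      by simp [hab.symm], by simp [h3, h1]⟩
  by_cases h4 : d = b
  · exact ⟨fun x => if x = b then 1 else 0, fun x => by dsimp; split <;> simp,
      by simp [hab], by simp [h4, h2]⟩
  · have hbc : b ≠ c := fun h => h2 h.symm
    have hdc : d ≠ c := hcd.symm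
    exact ⟨fun x => if x = a ∨ x = c then 0 else 1, fun x => by dsimp; split <;> simp,
      by simp [hab.symm, hbc], by simp [h1, h3, h4, hdc]⟩

lemma reduce {V : Type*} (χ' : V → ℕ) (F F' : Set V)
    (hp : ProperColoring χ' {F, F'}) :
    ∃ χ : V → ℕ, (∀ v, χ v = 0 ∨ χ v = 1) ∧ ProperColoring χ {F, F'} ∧
      ∀ u v : V, χ u ≠ χ v → χ' u ≠ χ' v := by
  have hpF := hp F (by simp)
  have hpF' := hp F' (by simp)
  push_neg at hpF hpF'
  obtain ⟨u₀, hu₀, -⟩ := hpF 0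
  obtain ⟨u₁, hu₁, hu⟩ := hpF (χ' u₀)
  obtain ⟨v₀, hv₀, -⟩ := hpF' 0
  obtain ⟨v₁, hv₁, hv⟩ := hpF' (χ' v₀)
  obtain ⟨f, hf01, hfab, hfcd⟩ :=
    exists_two_split (χ' u₀) (χ' u₁) (χ' v₀) (χ' v₁) (fun h => hu h.symm) (fun h => hv h.symm)
  refine ⟨fun v => f (χ' v), fun v => hf01 _, ?_, fun u v h hh => h (by show f (χ' u) = f (χ' v); rw [hh])⟩
  intro S hS
  rcases hS with h | h
  · subst h
    rintro ⟨j, hj⟩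
    exact hfab ((hj u₀ hu₀).trans (hj u₁ hu₁).symm)
  · rw [Set.mem_singleton_iff] at h
    subst h
    rintro ⟨j, hj⟩
    exact hfcd ((hj v₀ hv₀).trans (hj v₁ hv₁).symm)

/-- with exactly two forbidden sets there exists an optimal proper coloring
using at most two distinct colors. -/
theorem stmt_10 {V : Type*} [Fintype V] (G : SimpleGraph V) (hG : G.Connected)
    (w : Sym2 V → ℝ) (hw : ∀ e ∈ G.edgeSet, 0 < w e)
    (F F' : Set V) (hne : F ≠ F') (hF : 2 ≤ F.ncard) (hF' : 2 ≤ F'.ncard) :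
    ∃ χ : V → ℕ, ProperColoring χ {F, F'} ∧
      (∀ χ' : V → ℕ, ProperColoring χ' {F, F'} → cutCost G w χ ≤ cutCost G w χ') ∧
      (Set.range χ).ncard ≤ 2 := by
  classical
  -- a proper coloring exists: the injective one
  have hinit : ∃ χ₀ : V → ℕ, ProperColoring χ₀ {F, F'} := by
    refine ⟨fun v => (Fintype.equivFin V v : ℕ), ?_⟩
    intro S hS
    have h2 : 1 < S.ncard := by
      rcases hS with h | h
      · subst h; omega
      · rw [Set.mem_singleton_iff] at h; subst h; omega
    obtain ⟨x, hx, y, hy, hxy⟩ := (Set.one_lt_ncard S.toFinite).mp h2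
    rintro ⟨j, hj⟩
    exact hxy (by
      have := (hj x hx).trans (hj y hy).symm
      exact (Fintype.equivFin V).injective (Fin.val_injective this))
  obtain ⟨χ₀, hχ₀⟩ := hinit
  obtain ⟨χ₁, hχ₁01, hχ₁p, -⟩ := reduce χ₀ F F' hχ₀
  -- the finite set of proper Fin 2 colorings
  set coe2 : (V → Fin 2) → (V → ℕ) := fun g v => (g v : ℕ) with hcoe2
  have toFin2 : ∀ χ : V → ℕ, (∀ v, χ v = 0 ∨ χ v = 1) →
      ∃ g : V → Fin 2, coe2 g = χ := by
    intro χ h01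
    refine ⟨fun v => if χ v = 0 then 0 else 1, funext fun v => ?_⟩
    rcases h01 v with h | h <;> simp [hcoe2, h]
  let P : Finset (V → Fin 2) := Finset.univ.filter (fun g => ProperColoring (coe2 g) {F, F'})
  obtain ⟨g₀, hg₀⟩ := toFin2 χ₁ hχ₁01
  have hPne : P.Nonempty := by
    refine ⟨g₀, ?_⟩
    simp only [P, Finset.mem_filter, Finset.mem_univ, true_and]
    rw [hg₀]
    exact hχ₁p
  obtain ⟨g, hgP, hgmin⟩ := P.exists_min_image (fun g => cutCost G w (coe2 g)) hPne
  have hgproper : ProperColoring (coe2 g) {F, F'} := by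
    simpa only [P, Finset.mem_filter, Finset.mem_univ, true_and] using hgP
  refine ⟨coe2 g, hgproper, ?_, ?_⟩
  · intro χ' hχ'
    obtain ⟨χ₂, hχ₂01, hχ₂p, hχ₂cut⟩ := reduce χ' F F' hχ'
    obtain ⟨g', hg'⟩ := toFin2 χ₂ hχ₂01
    have hg'P : g' ∈ P := by
      simp only [P, Finset.mem_filter, Finset.mem_univ, true_and]
      rw [hg']
      exact hχ₂p
    calc cutCost G w (coe2 g) ≤ cutCost G w (coe2 g') := hgmin g' hg'P
      _ = cutCost G w χ₂ := by rw [hg']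
      _ ≤ cutCost G w χ' := by
          apply cut_mono G w hw
          intro e hcut hmono
          apply hcut
          intro u hu v hv
          by_contra hne'
          exact hχ₂cut u v hne' (hmono u hu v hv)
  · have hsub : Set.range (coe2 g) ⊆ ({0, 1} : Set ℕ) := by
      rintro x ⟨v, rfl⟩
      have := (g v).is_lt
      simp only [Set.mem_insert_iff, Set.mem_singleton_iff, coe2]
      omega
    calc (Set.range (coe2 g)).ncard ≤ ({0, 1} : Set ℕ).ncard :=
          Set.ncard_le_ncard hsub (Set.toFinite _)
      _ = 2 := Set.ncard_pair (by norm_num)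
end

section
/- Let T = (V, E) be a finite tree and let ℱ be a collection of forbidden subsets of V, each of cardinality at least 2. For F ∈ ℱ let E_F ⊆ E denote the union, over all pairs v, v' ∈ F, of the edge sets of the unique paths from v to v' in T. Then a subset E₁ ⊆ E is feasible (no connected component of (V, E₁) contains a forbidden set) if and only if for every F ∈ ℱ the deleted set E \ E₁ meets E_F, i.e., (E \ E₁) ∩ E_F ≠ ∅. -/
/-- `pathEdges G F`: the edges of `G` lying on a path between some pair of distinct vertices
of `F` (for a tree `G`, this is the union of the unique paths between pairs in `F`). -/
def pathEdges {V : Type*} (G : SimpleGraph V) (F : Set V) : Set (Sym2 V) :=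
  {e | ∃ u ∈ F, ∃ v ∈ F, u ≠ v ∧ ∃ p : G.Walk u v, p.IsPath ∧ e ∈ p.edges}

/-- on a tree, `E₁` is feasible iff for every forbidden set `F` the deleted
edge set `E \ E₁` meets `E_F`. -/
theorem stmt_12 {V : Type*} [Fintype V] (G : SimpleGraph V) (hT : G.IsTree)
    (ℱ : Set (Set V)) (hF : ∀ F ∈ ℱ, 2 ≤ F.ncard)
    (E₁ : Set (Sym2 V)) (hE₁ : E₁ ⊆ G.edgeSet) :
    Feasible E₁ ℱ ↔ ∀ F ∈ ℱ, ((G.edgeSet \ E₁) ∩ pathEdges G F).Nonempty := by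
  have hle : SimpleGraph.fromEdgeSet E₁ ≤ G := by
    have := SimpleGraph.fromEdgeSet_mono hE₁
    rwa [SimpleGraph.fromEdgeSet_edgeSet] at this
  constructor
  · intro hfeas F hFmem
    obtain ⟨u, hu, v, hv, hnr⟩ := by
      have := hfeas F hFmem
      push_neg at this
      exact this
    have huv : u ≠ v := by rintro rfl; exact hnr (SimpleGraph.Reachable.refl u)
    classical
    obtain ⟨p⟩ := (hT.isConnected.preconnected u v)
    obtain ⟨q, hq⟩ := p.toPath
    -- some edge of q.1 is not in E₁
    by_cases hall : ∀ e ∈ (q : G.Walk u v).edges, e ∈ E₁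
    · exact absurd ⟨((q : G.Walk u v).transfer _ (by
        intro e he
        rw [SimpleGraph.edgeSet_fromEdgeSet]
        exact ⟨hall e he, G.not_isDiag_of_mem_edgeSet ((q : G.Walk u v).edges_subset_edgeSet he)⟩))⟩ hnr
    · push_neg at hall
      obtain ⟨e, he, heE⟩ := hall
      exact ⟨e, ⟨⟨q.edges_subset_edgeSet he, heE⟩,
        u, hu, v, hv, huv, q, hq, he⟩⟩
  · intro h F hFmem hreach
    obtain ⟨e, ⟨heG, heE⟩, u, hu, v, hv, huv, p, hp, hep⟩ := h F hFmem
    obtain ⟨w⟩ := hreach u hu v hv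
    classical
    set W : G.Walk u v := w.mapLe hle with hW
    have hw : ∀ e' ∈ W.edges, e' ∈ E₁ := by
      intro e' he'
      rw [hW, SimpleGraph.Walk.mapLe, SimpleGraph.Walk.edges_map] at he'
      obtain ⟨e0, he0, rfl⟩ := List.mem_map.1 he'
      have h0 := w.edges_subset_edgeSet he0
      rw [SimpleGraph.edgeSet_fromEdgeSet] at h0
      simpa using h0.1
    have hqp : (W.toPath : G.Walk u v) = p :=
      congrArg Subtype.val (hT.IsAcyclic.path_unique W.toPath ⟨p, hp⟩)
    refine heE (hw e (W.edges_toPath_subset ?_))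
    rw [hqp]
    exact hep
end

section
/- Let G = (V, E₀) be a finite connected simple graph, and let T ⊆ V with 2 ≤ |T| < |V| be such that no edge of E₀ has both endpoints in T. Let ℰ_T be the collection of subsets X ⊆ E₀ such that the graph (V, X) is acyclic and no connected component of (V, X) contains more than one vertex of T. Then ℰ_T is the family of independent sets of a matroid on E₀; in particular, ∅ ∈ ℰ_T, ℰ_T is downward closed, and whenever X, Y ∈ ℰ_T with |X| < |Y| there exists e ∈ Y \ X with X ∪ {e} ∈ ℰ_T. -/
/-!
Because no component may contain two vertices of `S`, a set `X` lies in `ℰ_S` exactly when it is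
a forest in the graph obtained from `G` by identifying all of `S` to one vertex. This graphic
matroid is represented over `GF(2)` by the vectors `χ_u + χ_v` of the edges `uv`, where the
coordinates of `S` are deleted (`χ_t = 0` for `t ∈ S`): the vector of a new edge `uv` lies in the
span of the vectors of `X` iff `u` and `v` are already connected in `X`, or the components of `u`
and `v` both meet `S`. The exchange axiom is then the Steinitz exchange lemma.
-/

/-- Membership in `ℰ_T`: `X ⊆ E₀`, the graph `(V, X)` is acyclic, and no connected component
of `(V, X)` contains more than one vertex of `S`. -/
def MultiwayIndep {V : Type*} (G : SimpleGraph V) (S : Set V) (X : Set (Sym2 V)) : Prop :=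
  X ⊆ G.edgeSet ∧ (SimpleGraph.fromEdgeSet X).IsAcyclic ∧
    ∀ u ∈ S, ∀ v ∈ S, u ≠ v → ¬ (SimpleGraph.fromEdgeSet X).Reachable u v

open SimpleGraph Set Submodule

theorem LinearIndepOn.exists_insert_of_ncard_lt {K ι W : Type*} [DivisionRing K]
    [AddCommGroup W] [Module K W] {v : ι → W} {s t : Set ι}
    (hs : LinearIndepOn K v s) (ht : LinearIndepOn K v t) (hs_fin : s.Finite)
    (hst : s.ncard < t.ncard) : ∃ i ∈ t \ s, LinearIndepOn K v (insert i s) := by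
  by_contra! h
  have hspan : v '' t ⊆ span K (v '' s) := by
    rintro _ ⟨i, hi, rfl⟩
    by_cases his : i ∈ s
    · exact subset_span (mem_image_of_mem v his)
    · by_contra hnot
      exact h i ⟨hi, his⟩ ((linearIndepOn_insert his).mpr ⟨hs, hnot⟩)
  obtain ⟨ht_fin, hcard⟩ := exists_finite_card_le_of_finite_of_linearIndependent_of_span
    (hs_fin.image v) ht.id_image hspan
  rw [← ncard_eq_toFinset_card _ ht_fin, ← ncard_eq_toFinset_card _ (hs_fin.image v),
    ht.injOn.ncard_image] at hcard
  exact (hst.trans_le hcard).not_ge (ncard_image_le hs_fin)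

namespace SimpleGraph

variable {V : Type*}

lemma fromEdgeSet_insert_mk (X : Set (Sym2 V)) (u v : V) :
    fromEdgeSet (insert s(u, v) X) = fromEdgeSet X ⊔ edge u v := by
  rw [insert_eq, fromEdgeSet_union, edge, sup_comm]

lemma Reachable.of_sup_edge {H : SimpleGraph V} {u v a b : V}
    (h : (H ⊔ edge u v).Reachable a b) :
    H.Reachable a b ∨ (H.Reachable a u ∧ H.Reachable v b) ∨
      (H.Reachable a v ∧ H.Reachable u b) := by
  obtain ⟨p⟩ := h
  induction p with
  | nil => exact Or.inl .rfl
  | cons hadj _ ih =>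
    rcases hadj with hadj | hadj
    · have := hadj.reachable
      rcases ih with h | ⟨h₁, h₂⟩ | ⟨h₁, h₂⟩
      · exact Or.inl (this.trans h)
      · exact Or.inr (Or.inl ⟨this.trans h₁, h₂⟩)
      · exact Or.inr (Or.inr ⟨this.trans h₁, h₂⟩)
    · rw [edge_adj] at hadj
      rcases hadj.1 with ⟨rfl, rfl⟩ | ⟨rfl, rfl⟩ <;> grind [Reachable.refl]

end SimpleGraph

section MultiwayIndep

variable {V : Type*} {G : SimpleGraph V} {S : Set V} {X Y : Set (Sym2 V)}

lemma multiwayIndep_empty : MultiwayIndep G S ∅ := by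
  refine ⟨empty_subset _, ?_, fun u _ v _ huv h => huv ?_⟩
  · simp [isAcyclic_bot]
  · simpa using h

lemma MultiwayIndep.anti (hX : MultiwayIndep G S X) (hYX : Y ⊆ X) : MultiwayIndep G S Y :=
  ⟨hYX.trans hX.1, hX.2.1.anti (fromEdgeSet_mono hYX),
    fun u hu v hv huv h => hX.2.2 u hu v hv huv (h.mono (fromEdgeSet_mono hYX))⟩

lemma multiwayIndep_insert_iff {u v : V} (huv : G.Adj u v) (hX : s(u, v) ∉ X) :
    MultiwayIndep G S (insert s(u, v) X) ↔
      MultiwayIndep G S X ∧ ¬ (fromEdgeSet X).Reachable u v ∧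
        ¬ ((∃ t ∈ S, (fromEdgeSet X).Reachable u t) ∧
          ∃ t ∈ S, (fromEdgeSet X).Reachable v t) := by
  rw [MultiwayIndep, MultiwayIndep, fromEdgeSet_insert_mk, isAcyclic_sup_fromEdgeSet_iff,
    insert_subset_iff]
  constructor
  · rintro ⟨⟨-, hsub⟩, ⟨hacyc, hcyc⟩, hsep⟩
    have hreach : ¬ (fromEdgeSet X).Reachable u v := fun h =>
      (hcyc h).elim huv.ne fun hadj => hX ((fromEdgeSet_adj X).mp hadj).1
    refine ⟨⟨hsub, hacyc, fun a ha b hb hab h => hsep a ha b hb hab (h.mono le_sup_left)⟩,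
      hreach, ?_⟩
    rintro ⟨⟨t, ht, hut⟩, ⟨t', ht', hvt'⟩⟩
    have hedge : (fromEdgeSet X ⊔ edge u v).Adj u v := Or.inr (by simp [edge_adj, huv.ne])
    obtain rfl : t = t' := by
      by_contra htt'
      exact hsep t ht t' ht' htt' ((hut.symm.mono le_sup_left).trans
        (hedge.reachable.trans (hvt'.mono le_sup_left)))
    exact hreach (hut.trans hvt'.symm)
  · rintro ⟨⟨hsub, hacyc, hsep⟩, hreach, hS⟩
    refine ⟨⟨huv, hsub⟩, ⟨hacyc, fun h => (hreach h).elim⟩, fun a ha b hb hab h => ?_⟩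
    rcases h.of_sup_edge with h | ⟨hau, hvb⟩ | ⟨hav, hub⟩
    · exact hsep a ha b hb hab h
    · exact hS ⟨⟨a, ha, hau.symm⟩, ⟨b, hb, hvb⟩⟩
    · exact hS ⟨⟨b, hb, hub⟩, ⟨a, ha, hav.symm⟩⟩

end MultiwayIndep

section EdgeVectors

variable {V : Type*} (S : Set V)

open Classical in
noncomputable def groundedVec (c : V) : V → ZMod 2 :=
  if c ∈ S then 0 else Pi.single c 1

noncomputable def edgeVec : Sym2 V → V → ZMod 2 :=
  Sym2.lift ⟨fun u v => groundedVec S u + groundedVec S v, fun _ _ => add_comm _ _⟩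

variable {S} {X : Set (Sym2 V)}

lemma groundedVec_of_mem {c : V} (hc : c ∈ S) : groundedVec S c = 0 := if_pos hc

@[simp]
lemma edgeVec_mk (u v : V) : edgeVec S s(u, v) = groundedVec S u + groundedVec S v := rfl

lemma groundedVec_add_mem_span_of_reachable {a b : V} (h : (fromEdgeSet X).Reachable a b) :
    groundedVec S a + groundedVec S b ∈ span (ZMod 2) (edgeVec S '' X) := by
  obtain ⟨p⟩ := h
  induction p with
  | nil => simp only [ZModModule.add_self, zero_mem]
  | @cons a c b hadj _ ih =>
    have hac : groundedVec S a + groundedVec S c ∈ span (ZMod 2) (edgeVec S '' X) :=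
      subset_span ⟨s(a, c), ((fromEdgeSet_adj X).mp hadj).1, rfl⟩
    simpa only [ZModModule.add_add_add_cancel] using add_mem hac ih

lemma groundedVec_add_notMem_span [Fintype V] {u v : V}
    (huv : ¬ (fromEdgeSet X).Reachable u v) (hv : ∀ t ∈ S, ¬ (fromEdgeSet X).Reachable v t) :
    groundedVec S u + groundedVec S v ∉ span (ZMod 2) (edgeVec S '' X) := by
  classical
  -- summing the coordinates over the component of `v` kills every edge vector
  let F : (V → ZMod 2) →ₗ[ZMod 2] ZMod 2 :=
    ∑ x ∈ ({x | (fromEdgeSet X).Reachable x v} : Finset V), LinearMap.proj x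
  have hF (c : V) : F (groundedVec S c) = if (fromEdgeSet X).Reachable c v then 1 else 0 := by
    by_cases hc : c ∈ S
    · have hcv : ¬ (fromEdgeSet X).Reachable c v := fun h => hv c hc h.symm
      simp [F, groundedVec, hc, hcv]
    · simp [F, groundedVec, hc, Pi.single_apply]
  have hker : span (ZMod 2) (edgeVec S '' X) ≤ LinearMap.ker F := by
    rw [span_le]
    rintro _ ⟨e, he, rfl⟩
    induction e using Sym2.ind with
    | h a b =>
      have hab : (fromEdgeSet X).Reachable a v ↔ (fromEdgeSet X).Reachable b v := by
        rcases eq_or_ne a b with rfl | hne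
        · rfl
        · have hadj := ((fromEdgeSet_adj X).mpr ⟨he, hne⟩).reachable
          exact ⟨hadj.symm.trans, hadj.trans⟩
      simp [hF, hab, CharTwo.add_self_eq_zero]
  intro hmem
  simpa [hF, huv] using hker hmem

end EdgeVectors

section Representation

variable {V : Type*} [Fintype V] {G : SimpleGraph V} {S : Set V} {X : Set (Sym2 V)}

lemma edgeVec_mem_span_iff {u v : V} :
    edgeVec S s(u, v) ∈ span (ZMod 2) (edgeVec S '' X) ↔
      (fromEdgeSet X).Reachable u v ∨
        ((∃ t ∈ S, (fromEdgeSet X).Reachable u t) ∧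
          ∃ t ∈ S, (fromEdgeSet X).Reachable v t) := by
  constructor
  · intro h
    by_contra hcon
    rw [not_or, not_and_or] at hcon
    obtain ⟨huv, hu | hv⟩ := hcon
    · refine groundedVec_add_notMem_span (fun h => huv h.symm) (fun t ht h => hu ⟨t, ht, h⟩) ?_
      rwa [add_comm]
    · exact groundedVec_add_notMem_span huv (fun t ht h => hv ⟨t, ht, h⟩) h
  · rintro (h | ⟨⟨t, ht, hut⟩, ⟨t', ht', hvt'⟩⟩)
    · exact groundedVec_add_mem_span_of_reachable h
    · have := add_mem (groundedVec_add_mem_span_of_reachable (S := S) hut)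
        (groundedVec_add_mem_span_of_reachable hvt')
      rwa [groundedVec_of_mem ht, groundedVec_of_mem ht', add_zero, add_zero] at this

lemma multiwayIndep_insert_iff_notMem_span {u v : V} (huv : G.Adj u v) (hX : s(u, v) ∉ X) :
    MultiwayIndep G S (insert s(u, v) X) ↔
      MultiwayIndep G S X ∧ edgeVec S s(u, v) ∉ span (ZMod 2) (edgeVec S '' X) := by
  rw [multiwayIndep_insert_iff huv hX, edgeVec_mem_span_iff, not_or]

lemma MultiwayIndep.linearIndepOn (hX : MultiwayIndep G S X) :
    LinearIndepOn (ZMod 2) (edgeVec S) X := by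
  induction X, X.toFinite using Set.Finite.induction_on with
  | empty => exact linearIndepOn_empty _ _
  | @insert e X he _ ih =>
    induction e using Sym2.ind with
    | h u v =>
      have huv : G.Adj u v := hX.1 (mem_insert _ _)
      obtain ⟨hX, hspan⟩ := (multiwayIndep_insert_iff_notMem_span huv he).mp hX
      exact (linearIndepOn_insert he).mpr ⟨ih hX, hspan⟩

lemma MultiwayIndep.insert_of_notMem_span (hX : MultiwayIndep G S X) {e : Sym2 V}
    (he : e ∈ G.edgeSet) (hspan : edgeVec S e ∉ span (ZMod 2) (edgeVec S '' X)) :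
    MultiwayIndep G S (insert e X) := by
  induction e using Sym2.ind with
  | h u v =>
    have heX : s(u, v) ∉ X := fun h => hspan (subset_span (mem_image_of_mem _ h))
    exact (multiwayIndep_insert_iff_notMem_span he heX).mpr ⟨hX, hspan⟩

end Representation

theorem stmt_14_general {V : Type*} [Fintype V] (G : SimpleGraph V) (S : Set V) :
    MultiwayIndep G S ∅ ∧
    (∀ X : Set (Sym2 V), MultiwayIndep G S X → ∀ Y ⊆ X, MultiwayIndep G S Y) ∧
    (∀ X Y : Set (Sym2 V), MultiwayIndep G S X → MultiwayIndep G S Y →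
      X.ncard < Y.ncard → ∃ e ∈ Y \ X, MultiwayIndep G S (insert e X)) := by
  refine ⟨multiwayIndep_empty, fun X hX Y hYX => hX.anti hYX, fun X Y hX hY hXY => ?_⟩
  obtain ⟨e, he, hins⟩ :=
    hX.linearIndepOn.exists_insert_of_ncard_lt hY.linearIndepOn X.toFinite hXY
  exact ⟨e, he, hX.insert_of_notMem_span (hY.1 he.1) ((linearIndepOn_insert he.2).mp hins).2⟩

/-- `ℰ_T` is the family of independent sets of a matroid on `E₀`: it contains
`∅`, is downward closed, and satisfies the exchange (augmentation) axiom. -/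
theorem stmt_14 {V : Type*} [Fintype V] (G : SimpleGraph V) (hG : G.Connected)
    (S : Set V) (hS : 2 ≤ S.ncard) (hS' : S.ncard < Nat.card V)
    (hno : ∀ u v : V, G.Adj u v → u ∈ S → v ∉ S) :
    MultiwayIndep G S ∅ ∧
    (∀ X : Set (Sym2 V), MultiwayIndep G S X → ∀ Y ⊆ X, MultiwayIndep G S Y) ∧
    (∀ X Y : Set (Sym2 V), MultiwayIndep G S X → MultiwayIndep G S Y →
      X.ncard < Y.ncard → ∃ e ∈ Y \ X, MultiwayIndep G S (insert e X)) :=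
  stmt_14_general G S
end

section
/- Let T = (V, E) be a finite tree, let F ⊆ V with |F| ≥ 2, let v₀ ∉ V be a new vertex, and let T' be the graph on V ∪ {v₀} with edge set E ∪ { {v₀, u} : u ∈ F }. Then an edge e ∈ E lies on the unique path in T between some pair of distinct vertices of F if and only if e lies on some cycle of T'. -/
/-- The star edges joining the new vertex `v₀ = none` to the vertices of `F`. -/
def starEdges {V : Type*} (F : Set V) : Set (Sym2 (Option V)) :=
  {e | ∃ u ∈ F, e = s((none : Option V), some u)}

/-- Edge sets on `V` lifted to the vertex set `Option V` (`V` together with `v₀ = none`). -/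
def liftEdges {V : Type*} (X : Set (Sym2 V)) : Set (Sym2 (Option V)) :=
  Sym2.map some '' X

/-!
A path of `T` between distinct `u v ∈ F` closes up through `v₀` into a cycle of `T'`.
Conversely, `T'` without `v₀` is a copy of the acyclic `T`, so every cycle of `T'` passes
through `v₀`; cutting it open there leaves a path of `T` between two distinct neighbours
of `v₀`, i.e. vertices of `F`, which carries every edge of the cycle not incident to `v₀`.
-/

theorem Sym2.none_notMem_map_some {V : Type*} (e : Sym2 V) : none ∉ Sym2.map some e := by
  simp [Sym2.mem_map]

namespace SimpleGraph

variable {V W : Type*} {G : SimpleGraph V} {H : SimpleGraph W}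

namespace Walk

theorem exists_map_eq_of_support_subset_range (f : G ↪g H) {u v : V} (w : H.Walk (f u) (f v))
    (hw : ∀ x ∈ w.support, x ∈ Set.range f) : ∃ p : G.Walk u v, p.map f.toHom = w := by
  suffices key : ∀ {a b : W} (w : H.Walk a b), (∀ x ∈ w.support, x ∈ Set.range f) →
      ∀ {u v : V} (hu : f u = a) (hv : f v = b),
        ∃ p : G.Walk u v, (p.map f.toHom).copy hu hv = w
    from key w hw rfl rfl
  intro a b w hw
  induction w with
  | nil =>
    rintro u v rfl hv
    obtain rfl := f.injective hv
    exact ⟨nil, rfl⟩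
  | cons h w ih =>
    rintro u v rfl rfl
    obtain ⟨z, rfl⟩ := hw _ (List.mem_cons_of_mem _ w.start_mem_support)
    obtain ⟨p, hp⟩ := ih (fun x hx => hw x (List.mem_cons_of_mem _ hx)) rfl rfl
    exact ⟨cons (f.map_adj_iff.mp h) p, by simpa using hp⟩

theorem cons_concat_isCycle_iff {x u v : V} (hu : G.Adj x u) (hv : G.Adj v x) (p : G.Walk u v) :
    (cons hu (p.concat hv)).IsCycle ↔ p.IsPath ∧ x ∉ p.support ∧ u ≠ v := by
  rw [cons_isCycle_iff, concat_isPath_iff, edges_concat, List.concat_eq_append, List.mem_append,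
    List.mem_singleton, and_assoc]
  refine and_congr_right fun _ => and_congr_right fun hx => ?_
  have hxv : x ≠ v := fun h => hx (h ▸ p.end_mem_support)
  have hxu : s(x, u) ∉ p.edges := fun h => hx (p.fst_mem_support_of_mem_edges h)
  simp [hxu, hxv]

theorem IsCycle.exists_eq_cons_concat {x : V} {c : G.Walk x x} (hc : c.IsCycle) :
    ∃ (u v : V) (hu : G.Adj x u) (hv : G.Adj v x) (p : G.Walk u v),
      c = cons hu (p.concat hv) ∧ p.IsPath ∧ x ∉ p.support ∧ u ≠ v := by
  cases c with
  | nil => exact (not_isCycle_nil hc).elim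
  | cons hu q =>
    cases q with
    | nil => exact absurd rfl hu.ne
    | cons h q =>
      obtain ⟨v, p, hv, hq⟩ := exists_cons_eq_concat h q
      rw [hq] at hc ⊢
      exact ⟨_, _, hu, hv, p, rfl, (cons_concat_isCycle_iff hu hv p).mp hc⟩

end Walk

variable (G) (F : Set V)

/-- The graph `T'`. -/
def apexGraph : SimpleGraph (Option V) :=
  fromEdgeSet (liftEdges G.edgeSet ∪ starEdges F)

variable {G F}

theorem apexGraph_adj_some_some {a b : V} :
    (apexGraph G F).Adj (some a) (some b) ↔ G.Adj a b := by
  rw [apexGraph, fromEdgeSet_adj, Set.mem_union, liftEdges, ← Sym2.map_mk,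
    (Sym2.map.injective (Option.some_injective V)).mem_set_image]
  simpa [starEdges] using fun h => h.ne

theorem apexGraph_adj_none_some {u : V} : (apexGraph G F).Adj none (some u) ↔ u ∈ F := by
  have hlift : s(none, some u) ∉ liftEdges G.edgeSet := by
    rintro ⟨e, -, he⟩
    exact Sym2.none_notMem_map_some e (he ▸ Sym2.mem_mk_left _ _)
  simp [apexGraph, hlift, starEdges]

variable (G F) in
def apexGraphEmbedding : G ↪g apexGraph G F where
  toFun := some
  inj' := Option.some_injective V
  map_rel_iff' := apexGraph_adj_some_some

@[simp]
theorem coe_apexGraphEmbedding : ⇑(apexGraphEmbedding G F) = some := rfl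

theorem exists_map_eq_of_none_notMem_support {u v : V}
    (w : (apexGraph G F).Walk (some u) (some v)) (hw : none ∉ w.support) :
    ∃ p : G.Walk u v, p.map (apexGraphEmbedding G F).toHom = w :=
  w.exists_map_eq_of_support_subset_range (apexGraphEmbedding G F) fun _ hx =>
    Option.ne_none_iff_exists.mp (ne_of_mem_of_not_mem hx hw)

theorem IsAcyclic.none_mem_support_of_isCycle (hG : G.IsAcyclic) {x : Option V}
    {c : (apexGraph G F).Walk x x} (hc : c.IsCycle) : none ∈ c.support := by
  by_contra hn
  obtain ⟨a, rfl⟩ := Option.ne_none_iff_exists'.mp (ne_of_mem_of_not_mem c.start_mem_support hn)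
  obtain ⟨p, rfl⟩ := exists_map_eq_of_none_notMem_support c hn
  exact hG p hc.of_map

theorem exists_isCycle_apexGraph_of_isPath {u v : V} (hu : u ∈ F) (hv : v ∈ F) (huv : u ≠ v)
    {p : G.Walk u v} (hp : p.IsPath) :
    ∃ c : (apexGraph G F).Walk none none,
      c.IsCycle ∧ ∀ e ∈ p.edges, Sym2.map some e ∈ c.edges := by
  have hfu : (apexGraph G F).Adj none (apexGraphEmbedding G F u) :=
    apexGraph_adj_none_some.mpr hu
  have hfv : (apexGraph G F).Adj (apexGraphEmbedding G F v) none :=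
    (apexGraph_adj_none_some.mpr hv).symm
  refine ⟨.cons hfu ((p.map (apexGraphEmbedding G F).toHom).concat hfv), ?_, fun e he => ?_⟩
  · rw [Walk.cons_concat_isCycle_iff]
    refine ⟨hp.map (apexGraphEmbedding G F).injective, ?_, by simpa using huv⟩
    rw [Walk.support_map]
    simp
  · rw [Walk.edges_cons, Walk.edges_concat, Walk.edges_map, List.mem_cons, List.concat_eq_append,
      List.mem_append, List.mem_map]
    exact .inr (.inl ⟨e, he, rfl⟩)

theorem IsAcyclic.exists_isPath_of_isCycle_apexGraph (hG : G.IsAcyclic) {x : Option V}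
    {c : (apexGraph G F).Walk x x} (hc : c.IsCycle) :
    ∃ u ∈ F, ∃ v ∈ F, u ≠ v ∧
      ∃ p : G.Walk u v, p.IsPath ∧ ∀ e, Sym2.map some e ∈ c.edges → e ∈ p.edges := by
  classical
  have hn := hG.none_mem_support_of_isCycle hc
  obtain ⟨u, v, hu, hv, q, hcq, hq, hnq, huv⟩ := (hc.rotate hn).exists_eq_cons_concat
  obtain ⟨a, rfl⟩ := Option.ne_none_iff_exists'.mp hu.ne.symm
  obtain ⟨b, rfl⟩ := Option.ne_none_iff_exists'.mp hv.ne
  obtain ⟨p, hpq⟩ := exists_map_eq_of_none_notMem_support q hnq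
  have hp : p.IsPath := by
    subst hpq
    exact hq.of_map
  have hqe : q.edges = p.edges.map (Sym2.map some) := by
    subst hpq
    exact Walk.edges_map _ _
  refine ⟨a, apexGraph_adj_none_some.mp hu, b, apexGraph_adj_none_some.mp hv.symm,
    by simpa using huv, p, hp, fun e he => ?_⟩
  have he' := (c.rotate_edges none hn).mem_iff.mpr he
  rw [hcq, Walk.edges_cons, Walk.edges_concat, hqe] at he'
  rw [List.mem_cons, List.concat_eq_append, List.mem_append, List.mem_map,
    List.mem_singleton] at he'
  rcases he' with h | ⟨e', he', h⟩ | h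
  · exact (Sym2.none_notMem_map_some e (h ▸ Sym2.mem_mk_left _ _)).elim
  · exact Sym2.map.injective (Option.some_injective V) h ▸ he'
  · exact (Sym2.none_notMem_map_some e (h ▸ Sym2.mem_mk_right _ _)).elim

end SimpleGraph

theorem stmt_19_general {V : Type*} (G : SimpleGraph V) (hT : G.IsTree) (F : Set V) :
    ∀ e ∈ G.edgeSet,
      ((∃ u ∈ F, ∃ v ∈ F, u ≠ v ∧ ∃ p : G.Walk u v, p.IsPath ∧ e ∈ p.edges) ↔
        (∃ (x : Option V)
          (c : (SimpleGraph.fromEdgeSet (liftEdges G.edgeSet ∪ starEdges F)).Walk x x),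
          c.IsCycle ∧ Sym2.map some e ∈ c.edges)) := by
  intro e _
  constructor
  · rintro ⟨u, hu, v, hv, huv, p, hp, he⟩
    obtain ⟨c, hc, hpc⟩ := SimpleGraph.exists_isCycle_apexGraph_of_isPath hu hv huv hp
    exact ⟨none, c, hc, hpc e he⟩
  · rintro ⟨x, c, hc, he⟩
    obtain ⟨u, hu, v, hv, huv, p, hp, hcp⟩ := hT.isAcyclic.exists_isPath_of_isCycle_apexGraph hc
    exact ⟨u, hu, v, hv, huv, p, hp, hcp e he⟩

/-- in a tree `T`, an edge `e` lies on the (unique) path between some pair of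
distinct vertices of `F` iff `e` lies on some cycle of the graph `T'` obtained by adjoining
a new vertex `v₀` joined to each vertex of `F`. -/
theorem stmt_19 {V : Type*} [Fintype V] (G : SimpleGraph V) (hT : G.IsTree)
    (F : Set V) (hF : 2 ≤ F.ncard) :
    ∀ e ∈ G.edgeSet,
      ((∃ u ∈ F, ∃ v ∈ F, u ≠ v ∧ ∃ p : G.Walk u v, p.IsPath ∧ e ∈ p.edges) ↔
        (∃ (x : Option V)
          (c : (SimpleGraph.fromEdgeSet (liftEdges G.edgeSet ∪ starEdges F)).Walk x x),
          c.IsCycle ∧ Sym2.map some e ∈ c.edges)) :=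
  stmt_19_general G hT F
end
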